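/- SNA holds with the options ((f̄^N, −h̄^N), (α, −γ)) in the N-fold enlarged space (Ω̄^N, 𝓕̄^N_T, 𝔽̄^N) with measure class 𝒫̄^N if and only if SNA holds with ((f̄^{N+1}, −h̄^{N+1}), (α, −γ)) in the (N+1)-fold enlarged space (Ω̄^{N+1}, 𝓕̄^{N+1}_T, 𝔽̄^{N+1}) with measure class 𝒫̄^{N+1}. -/
import Mathlib


open MeasureTheory Finset
open scoped ENNReal NNReal

noncomputable section

namespace Stmt15

/-! ### Universal completion -/

/-- The completion of the σ-algebra `m` with respect to the measure `μ`. -/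
def completionWrt {X : Type*} (m : MeasurableSpace X) (μ : @Measure X m) :
    MeasurableSpace X :=
  @NullMeasurableSpace.instMeasurableSpace X m μ

/-- The universal completion of a σ-algebra: the intersection of the completions with
respect to all finite measures. -/
def univCompletion {X : Type*} (m : MeasurableSpace X) : MeasurableSpace X :=
  ⨅ (μ : @Measure X m) (_ : @IsFiniteMeasure X m μ), completionWrt m μ

/-! ### The path space and its filtration -/

/-- `Ω = Ξ_T = Ξ^T`. -/
abbrev POmega (Ξ : Type*) (T : ℕ) := Fin T → Ξ

variable {Ξ : Type*} [MeasurableSpace Ξ]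

/-- The Borel filtration: `σ(ω_1,…,ω_t)` (coordinate `i` carries time `i+1`). -/
def borelF (Ξ : Type*) [MeasurableSpace Ξ] (T t : ℕ) : MeasurableSpace (POmega Ξ T) :=
  MeasurableSpace.comap
    (fun (ω : POmega Ξ T) (i : {i : Fin T // (i : ℕ) < t}) => ω i.1) inferInstance

/-- `𝓕_t`: the universal completion of the Borel σ-algebra of `Ξ_t`, pulled back to `Ω`. -/
def origF (Ξ : Type*) [MeasurableSpace Ξ] (T : ℕ) (t : ℕ) : MeasurableSpace (POmega Ξ T) :=
  MeasurableSpace.comap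
    (fun (ω : POmega Ξ T) (i : {i : Fin T // (i : ℕ) < t}) => ω i.1)
    (univCompletion inferInstance)

/-! ### The family `𝒫` of priors -/

/-- Iterated product `P_0 ⊗ … ⊗ P_{t-1}` of a family of kernels. -/
def seqMeas (Pk : (t : ℕ) → (Fin t → Ξ) → Measure Ξ) : (t : ℕ) → Measure (Fin t → Ξ)
  | 0 => Measure.dirac Fin.elim0
  | (t + 1) => (seqMeas Pk t).bind (fun ω => (Pk t ω).map (fun ξ => Fin.snoc ω ξ))

/-- Universally measurable selector condition for a kernel. -/
def IsUnivMeasSelector (T : ℕ) (Psel : (t : ℕ) → (Fin t → Ξ) → Set (Measure Ξ))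
    (Pk : (t : ℕ) → (Fin t → Ξ) → Measure Ξ) : Prop :=
  (∀ t, t < T → ∀ ω, Pk t ω ∈ Psel t ω) ∧
  ∀ t, t < T → @Measurable _ _ (univCompletion inferInstance) _ (Pk t)

/-- The set `𝒫 = {P_0 ⊗ … ⊗ P_{T-1} : P_t(·) ∈ 𝒫_t(·)}` of priors. -/
def PSet (T : ℕ) (Psel : (t : ℕ) → (Fin t → Ξ) → Set (Measure Ξ)) :
    Set (Measure (POmega Ξ T)) :=
  {μ | ∃ Pk, IsUnivMeasSelector T Psel Pk ∧ μ = seqMeas Pk T}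

/-- Structural standing assumptions on the correspondences `𝒫_t`: nonempty and convex
values consisting of probability measures, with analytic graph. -/
def PselStanding (Ξ : Type*) [MeasurableSpace Ξ] [TopologicalSpace Ξ] [OpensMeasurableSpace Ξ] (T : ℕ)
    (Psel : (t : ℕ) → (Fin t → Ξ) → Set (Measure Ξ)) : Prop :=
  (∀ t, t < T → ∀ ω, (Psel t ω).Nonempty) ∧
  (∀ t ω P, P ∈ Psel t ω → IsProbabilityMeasure P) ∧
  (∀ t ω, ∀ P1 ∈ Psel t ω, ∀ P2 ∈ Psel t ω, ∀ a b : ℝ≥0∞, a + b = 1 →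
    a • P1 + b • P2 ∈ Psel t ω) ∧
  ∀ t, t < T → MeasureTheory.AnalyticSet
    {p : (Fin t → Ξ) × ProbabilityMeasure Ξ | (p.2 : Measure Ξ) ∈ Psel t p.1}

/-! ### Quasi-sure notions -/

/-- A property holds `𝒫'`-quasi surely. -/
def QuasiSure {X : Type*} [MeasurableSpace X] (P' : Set (Measure X)) (p : X → Prop) : Prop :=
  ∀ P ∈ P', ∀ᵐ x ∂P, p x

/-- `Q ⋘ 𝒫'`: `Q` is dominated by some element of `𝒫'`. -/
def DomBy {X : Type*} [MeasurableSpace X] (Q : Measure X) (P' : Set (Measure X)) : Prop :=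
  ∃ P ∈ P', Q ≪ P

/-! ### The enlarged space -/

variable {Ω : Type*}

/-- The enlarged sample space `Ω̄ⁿ = Ω × 𝕋ⁿ`. -/
abbrev EnlOmega (Ω : Type*) (T n : ℕ) := Ω × (Fin n → Fin (T + 1))

/-- The enlarged filtration `𝓕̄ⁿ_t = σ(𝓕_t × 𝕋ⁿ, {θᵏ ≤ s}, s ≤ t, k ≤ n)`. -/
def enlF (T n : ℕ) (ℱ : ℕ → MeasurableSpace Ω) (t : ℕ) :
    MeasurableSpace (EnlOmega Ω T n) :=
  MeasurableSpace.generateFrom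
    ({A | ∃ B, MeasurableSet[ℱ t] B ∧ A = Prod.fst ⁻¹' B} ∪
     {A | ∃ (k : Fin n) (s : ℕ), s ≤ t ∧ A = {x : EnlOmega Ω T n | ((x.2 k : ℕ)) ≤ s}})

/-- Trivial extension of a process from `Ω` to `Ω̄ⁿ`. -/
def extProc {E : Type*} (T n : ℕ) (X : ℕ → Ω → E) : ℕ → EnlOmega Ω T n → E :=
  fun t x => X t x.1

/-- Trivial extension of a random variable from `Ω` to `Ω̄ⁿ`. -/
def extFun {E : Type*} (T n : ℕ) (ψ : Ω → E) : EnlOmega Ω T n → E := fun x => ψ x.1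

/-- Extension `h̄^{k,n}(ω,t¹,…,tⁿ) = h^k_{tᵏ}(ω)` of the shorted American options. -/
def extShort (T N n : ℕ) (hn : N ≤ n) (h : Fin N → ℕ → Ω → ℝ) (k : Fin N) :
    EnlOmega Ω T n → ℝ :=
  fun x => h k ((x.2 (Fin.castLE hn k)) : ℕ) x.1

/-- Extension `φ̄^{N+1}(ω,t¹,…,t^{N+1}) = φ_{t^{N+1}}(ω)`. -/
def extLast (T N : ℕ) (φ : ℕ → Ω → ℝ) : EnlOmega Ω T (N + 1) → ℝ :=
  fun x => φ ((x.2 (Fin.last N)) : ℕ) x.1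

/-- `𝒯̄ⁿ`: `𝔽̄ⁿ`-stopping times with values in `𝕋 = {0,…,T}`. -/
def IsEnlStoppingTime (T n : ℕ) (ℱ : ℕ → MeasurableSpace Ω)
    (τ : EnlOmega Ω T n → Fin (T + 1)) : Prop :=
  ∀ t : ℕ, MeasurableSet[enlF T n ℱ t] {x | (τ x : ℕ) ≤ t}

/-- `S` is a `Q`-martingale w.r.t. the filtration `𝔉` (time horizon `T`). -/
def IsMartingaleMeasure {X : Type*} [MeasurableSpace X] (T d : ℕ)
    (𝔉 : ℕ → MeasurableSpace X) (S : ℕ → X → Fin d → ℝ) (Q : Measure X) : Prop :=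
  (∀ t, t ≤ T → Integrable (S t) Q) ∧
  ∀ t, t < T → ∀ A : Set X, MeasurableSet[𝔉 t] A →
    ∫ x in A, S (t + 1) x ∂Q = ∫ x in A, S t x ∂Q

/-- Gain from dynamic trading on the enlarged space: `H̄·S̄ⁿ`. -/
def enlStockGain (T d n : ℕ) (H : ℕ → EnlOmega Ω T n → Fin d → ℝ)
    (S : ℕ → Ω → Fin d → ℝ) (x : EnlOmega Ω T n) : ℝ :=
  ∑ t ∈ Finset.range T, ∑ i, H t x i * (S (t + 1) x.1 i - S t x.1 i)

variable [MeasurableSpace Ω]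

/-- `𝓛̄ⁿ`: liquidating strategies on the enlarged space, with Borel components. -/
def EnlLiqB (T n : ℕ) (ℱ : ℕ → MeasurableSpace Ω) : Set (ℕ → EnlOmega Ω T n → ℝ) :=
  {μ | (∀ t, Measurable[enlF T n ℱ t] (μ t)) ∧ (∀ t, Measurable (μ t)) ∧
    (∀ t x, 0 ≤ μ t x) ∧ ∀ x, ∑ t ∈ Finset.range (T + 1), μ t x = 1}

/-- `𝒫̄ⁿ = {P ⊗ R : P ∈ 𝒫, R probability measure on 𝕋ⁿ}`. -/
def PbarSet (T n : ℕ) (P' : Set (Measure Ω)) : Set (Measure (EnlOmega Ω T n)) :=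
  {μ | ∃ P ∈ P', ∃ R : Measure (Fin n → Fin (T + 1)), IsProbabilityMeasure R ∧ μ = P.prod R}

/-- The payoff `Φ̄ⁿ_{α,β,γ}(H̄,a,b,μ̄,c)` of a semi-static strategy on the enlarged space. -/
def PhiBar (T d L M N n : ℕ) (hn : N ≤ n)
    (S : ℕ → Ω → Fin d → ℝ) (f : Fin L → Ω → ℝ) (g : Fin M → ℕ → Ω → ℝ)
    (h : Fin N → ℕ → Ω → ℝ) (α : Fin L → ℝ) (β : Fin M → ℝ) (γ : Fin N → ℝ)
    (H : ℕ → EnlOmega Ω T n → Fin d → ℝ) (a : Fin L → ℝ) (b : Fin M → ℝ)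
    (μ : Fin M → ℕ → EnlOmega Ω T n → ℝ) (c : Fin N → ℝ) (x : EnlOmega Ω T n) : ℝ :=
  enlStockGain T d n H S x + (∑ i, a i * (f i x.1 - α i))
    + (∑ j, b j * ((∑ t ∈ Finset.range (T + 1), g j t x.1 * μ j t x) - β j))
    - ∑ k, c k * (extShort T N n hn h k x - γ k)

/-- No arbitrage in `𝕄̄ⁿ` w.r.t. the prices `(α,β,γ)`, quasi-sure version. -/
def NAbarQS (T d L M N n : ℕ) (hn : N ≤ n) (ℱ : ℕ → MeasurableSpace Ω)
    (S : ℕ → Ω → Fin d → ℝ) (f : Fin L → Ω → ℝ) (g : Fin M → ℕ → Ω → ℝ)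
    (h : Fin N → ℕ → Ω → ℝ) (Pbar : Set (Measure (EnlOmega Ω T n)))
    (α : Fin L → ℝ) (β : Fin M → ℝ) (γ : Fin N → ℝ) : Prop :=
  ∀ H a b μ c, (∀ t, Measurable[enlF T n ℱ t] (H t)) → (∀ i, 0 ≤ a i) →
    (∀ j, 0 ≤ b j) → (∀ k, 0 ≤ c k) → (∀ j, μ j ∈ EnlLiqB T n ℱ) →
    QuasiSure Pbar (fun x => 0 ≤ PhiBar T d L M N n hn S f g h α β γ H a b μ c x) →
    QuasiSure Pbar (fun x => PhiBar T d L M N n hn S f g h α β γ H a b μ c x = 0)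

/-- Strict no arbitrage in `𝕄̄ⁿ`, quasi-sure version. -/
def SNAbarQS (T d L M N n : ℕ) (hn : N ≤ n) (ℱ : ℕ → MeasurableSpace Ω)
    (S : ℕ → Ω → Fin d → ℝ) (f : Fin L → Ω → ℝ) (g : Fin M → ℕ → Ω → ℝ)
    (h : Fin N → ℕ → Ω → ℝ) (Pbar : Set (Measure (EnlOmega Ω T n)))
    (α : Fin L → ℝ) (β : Fin M → ℝ) (γ : Fin N → ℝ) : Prop :=
  ∃ ε > (0 : ℝ), NAbarQS T d L M N n hn ℱ S f g h Pbar
    (fun i => α i - ε) (fun j => β j - ε) (fun k => γ k + ε)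

/-- `sup_{τ ∈ 𝒯̄ⁿ} E_Q[ḡ_τ]`. -/
def supStop (T n : ℕ) (ℱ : ℕ → MeasurableSpace Ω) (g : ℕ → Ω → ℝ)
    (Q : Measure (EnlOmega Ω T n)) : ℝ :=
  sSup {r : ℝ | ∃ τ, IsEnlStoppingTime T n ℱ τ ∧ r = ∫ x, g ((τ x) : ℕ) x.1 ∂Q}

/-- The set `𝒬̄ⁿ(α',β',γ')` of martingale measures `Q ⋘ 𝒫̄ⁿ` with
`E_Q[f̄ⁿ] ≤ α'`, `E_Q[h̄ⁿ] ≥ γ'` and `sup_τ E_Q[ḡⁿ_τ] ≤ β'`. -/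
def QbarLe (T d L M N n : ℕ) (hn : N ≤ n) (ℱ : ℕ → MeasurableSpace Ω)
    (S : ℕ → Ω → Fin d → ℝ) (f : Fin L → Ω → ℝ) (g : Fin M → ℕ → Ω → ℝ)
    (h : Fin N → ℕ → Ω → ℝ) (Pbar : Set (Measure (EnlOmega Ω T n)))
    (α' : Fin L → ℝ) (β' : Fin M → ℝ) (γ' : Fin N → ℝ) :
    Set (Measure (EnlOmega Ω T n)) :=
  {Q | IsProbabilityMeasure Q ∧ DomBy Q Pbar ∧
    IsMartingaleMeasure T d (enlF T n ℱ) (extProc T n S) Q ∧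
    (∀ i, Integrable (extFun T n (f i)) Q ∧ ∫ x, extFun T n (f i) x ∂Q ≤ α' i) ∧
    (∀ k, γ' k ≤ ∫ x, extShort T N n hn h k x ∂Q) ∧
    ∀ j, supStop T n ℱ (g j) Q ≤ β' j}

/-- `η̄(φ̄)`: payoff of the American option `φ` liquidated via `η̄ ∈ 𝓛̄ⁿ`. -/
def enlLiqPay (T n : ℕ) (φ : ℕ → Ω → ℝ) (η : ℕ → EnlOmega Ω T n → ℝ)
    (x : EnlOmega Ω T n) : ℝ :=
  ∑ t ∈ Finset.range (T + 1), φ t x.1 * η t x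

/-- `NA(𝒫̄ⁿ)`: no arbitrage with dynamic trading only. -/
def NAdyn (T d n : ℕ) (ℱ : ℕ → MeasurableSpace Ω) (S : ℕ → Ω → Fin d → ℝ)
    (Pbar : Set (Measure (EnlOmega Ω T n))) : Prop :=
  ∀ H : ℕ → EnlOmega Ω T n → Fin d → ℝ, (∀ t, Measurable[enlF T n ℱ t] (H t)) →
    QuasiSure Pbar (fun x => 0 ≤ enlStockGain T d n H S x) →
    QuasiSure Pbar (fun x => enlStockGain T d n H S x = 0)

/-- `𝒬̄ⁿ`: martingale measures for `S̄ⁿ` dominated by some element of `𝒫̄ⁿ`. -/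
def QbarDyn (T d n : ℕ) (ℱ : ℕ → MeasurableSpace Ω) (S : ℕ → Ω → Fin d → ℝ)
    (Pbar : Set (Measure (EnlOmega Ω T n))) : Set (Measure (EnlOmega Ω T n)) :=
  {Q | IsProbabilityMeasure Q ∧ DomBy Q Pbar ∧
    IsMartingaleMeasure T d (enlF T n ℱ) (extProc T n S) Q}

/-- Extended-real expectation `E_Q[ζ] = ∫ ζ⁺ dQ - ∫ ζ⁻ dQ ∈ [-∞,∞]`. -/
def eExp {X : Type*} [MeasurableSpace X] (Q : Measure X) (ζ : X → ℝ) : EReal :=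
  ((∫⁻ x, ENNReal.ofReal (ζ x) ∂Q : ℝ≥0∞) : EReal) -
    ((∫⁻ x, ENNReal.ofReal (-ζ x) ∂Q : ℝ≥0∞) : EReal)

/-- `NA(𝒫̄ⁿ)` with statically tradable European options `(ξ, ξ̃)`. -/
def NAopt (T d n e : ℕ) (ℱ : ℕ → MeasurableSpace Ω) (S : ℕ → Ω → Fin d → ℝ)
    (ξ : Fin e → EnlOmega Ω T n → ℝ) (ξt : Fin e → ℝ)
    (Pbar : Set (Measure (EnlOmega Ω T n))) : Prop :=
  ∀ (H : ℕ → EnlOmega Ω T n → Fin d → ℝ) (a : Fin e → ℝ),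
    (∀ t, Measurable[enlF T n ℱ t] (H t)) → (∀ i, 0 ≤ a i) →
    QuasiSure Pbar (fun x => 0 ≤ enlStockGain T d n H S x + ∑ i, a i * (ξ i x - ξt i)) →
    QuasiSure Pbar (fun x => enlStockGain T d n H S x + ∑ i, a i * (ξ i x - ξt i) = 0)

/-- `SNA(𝒫̄ⁿ)` with `(ξ, ξ̃)`. -/
def SNAopt (T d n e : ℕ) (ℱ : ℕ → MeasurableSpace Ω) (S : ℕ → Ω → Fin d → ℝ)
    (ξ : Fin e → EnlOmega Ω T n → ℝ) (ξt : Fin e → ℝ)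
    (Pbar : Set (Measure (EnlOmega Ω T n))) : Prop :=
  ∃ ε > (0 : ℝ), NAopt T d n e ℱ S ξ (fun i => ξt i - ε) Pbar

/-- `𝒬̄ⁿ_{ξ̂}`: martingale measures `Q ⋘ 𝒫̄ⁿ` with `E_Q[ξ] ≤ ξ̂`. -/
def QbarXi (T d n e : ℕ) (ℱ : ℕ → MeasurableSpace Ω) (S : ℕ → Ω → Fin d → ℝ)
    (ξ : Fin e → EnlOmega Ω T n → ℝ) (ξhat : Fin e → ℝ)
    (Pbar : Set (Measure (EnlOmega Ω T n))) : Set (Measure (EnlOmega Ω T n)) :=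
  {Q | IsProbabilityMeasure Q ∧ DomBy Q Pbar ∧
    IsMartingaleMeasure T d (enlF T n ℱ) (extProc T n S) Q ∧
    ∀ i, Integrable (ξ i) Q ∧ ∫ x, ξ i x ∂Q ≤ ξhat i}

/-- The sub-hedging price `π̲(φ)` under model uncertainty. -/
def subPriceQS (T d L M N : ℕ) (ℱ : ℕ → MeasurableSpace Ω)
    (S : ℕ → Ω → Fin d → ℝ) (f : Fin L → Ω → ℝ) (g : Fin M → ℕ → Ω → ℝ)
    (h : Fin N → ℕ → Ω → ℝ) (Pbar : Set (Measure (EnlOmega Ω T N)))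
    (α : Fin L → ℝ) (β : Fin M → ℝ) (γ : Fin N → ℝ) (φ : ℕ → Ω → ℝ) : ℝ :=
  sSup {x : ℝ | ∃ H a b μ c η, (∀ t, Measurable[enlF T N ℱ t] (H t)) ∧
    (∀ i, 0 ≤ a i) ∧ (∀ j, 0 ≤ b j) ∧ (∀ k, 0 ≤ c k) ∧
    (∀ j, μ j ∈ EnlLiqB T N ℱ) ∧ η ∈ EnlLiqB T N ℱ ∧
    QuasiSure Pbar (fun y =>
      x ≤ PhiBar T d L M N N le_rfl S f g h α β γ H a b μ c y + enlLiqPay T N φ η y)}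

/-- The super-hedging price `π̄(φ)` under model uncertainty. -/
def superPriceQS (T d L M N : ℕ) (ℱ : ℕ → MeasurableSpace Ω)
    (S : ℕ → Ω → Fin d → ℝ) (f : Fin L → Ω → ℝ) (g : Fin M → ℕ → Ω → ℝ)
    (h : Fin N → ℕ → Ω → ℝ) (Pbar : Set (Measure (EnlOmega Ω T (N + 1))))
    (α : Fin L → ℝ) (β : Fin M → ℝ) (γ : Fin N → ℝ) (φ : ℕ → Ω → ℝ) : ℝ :=
  sInf {x : ℝ | ∃ H a b μ c, (∀ t, Measurable[enlF T (N + 1) ℱ t] (H t)) ∧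
    (∀ i, 0 ≤ a i) ∧ (∀ j, 0 ≤ b j) ∧ (∀ k, 0 ≤ c k) ∧
    (∀ j, μ j ∈ EnlLiqB T (N + 1) ℱ) ∧
    QuasiSure Pbar (fun y => extLast T N φ y ≤
      x + PhiBar T d L M N (N + 1) (Nat.le_succ N) S f g h α β γ H a b μ c y)}

/-- The set `𝒬(α)` on the original space (standing assumption (i)). -/
def QalphaSet (Ξ : Type*) [MeasurableSpace Ξ] (T d L : ℕ)
    (S : ℕ → POmega Ξ T → Fin d → ℝ) (f : Fin L → POmega Ξ T → ℝ)
    (P' : Set (Measure (POmega Ξ T))) (α : Fin L → ℝ) : Set (Measure (POmega Ξ T)) :=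
  {Q | IsProbabilityMeasure Q ∧ DomBy Q P' ∧
    IsMartingaleMeasure T d (origF Ξ T) S Q ∧
    ∀ i, Integrable (f i) Q ∧ ∫ ω, f i ω ∂Q ≤ α i}

/-- No arbitrage on the `n`-fold enlarged space with the statically tradable options
`(f̄ⁿ, -h̄ⁿ)` at prices `(α, -γ)`. -/
def NAfh (T d L N n : ℕ) (hn : N ≤ n) (ℱ : ℕ → MeasurableSpace Ω)
    (S : ℕ → Ω → Fin d → ℝ) (f : Fin L → Ω → ℝ) (h : Fin N → ℕ → Ω → ℝ)
    (Pbar : Set (Measure (EnlOmega Ω T n))) (α : Fin L → ℝ) (γ : Fin N → ℝ) : Prop :=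
  ∀ (H : ℕ → EnlOmega Ω T n → Fin d → ℝ) (a : Fin L → ℝ) (c : Fin N → ℝ),
    (∀ t, Measurable[enlF T n ℱ t] (H t)) → (∀ i, 0 ≤ a i) → (∀ k, 0 ≤ c k) →
    QuasiSure Pbar (fun x => 0 ≤ enlStockGain T d n H S x
      + (∑ i, a i * (extFun T n (f i) x - α i))
      - ∑ k, c k * (extShort T N n hn h k x - γ k)) →
    QuasiSure Pbar (fun x => enlStockGain T d n H S x
      + (∑ i, a i * (extFun T n (f i) x - α i))
      - (∑ k, c k * (extShort T N n hn h k x - γ k)) = 0)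

/-- Strict no arbitrage on the `n`-fold enlarged space with `((f̄ⁿ, -h̄ⁿ), (α, -γ))`. -/
def SNAfh (T d L N n : ℕ) (hn : N ≤ n) (ℱ : ℕ → MeasurableSpace Ω)
    (S : ℕ → Ω → Fin d → ℝ) (f : Fin L → Ω → ℝ) (h : Fin N → ℕ → Ω → ℝ)
    (Pbar : Set (Measure (EnlOmega Ω T n))) (α : Fin L → ℝ) (γ : Fin N → ℝ) : Prop :=
  ∃ ε > (0 : ℝ), NAfh T d L N n hn ℱ S f h Pbar
    (fun i => α i - ε) (fun k => γ k + ε)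

/-! ### Auxiliary lemmas for Statement 15 -/

lemma snoc_castLE_eq {n : ℕ} {α : Type*} (p : Fin n → α) (u : α) (k : Fin n) :
    (Fin.snoc p u : Fin (n + 1) → α) (Fin.castLE (Nat.le_succ n) k) = p k := by
  rw [show Fin.castLE (Nat.le_succ n) k = Fin.castSucc k from rfl, Fin.snoc_castSucc]

lemma castLE_rfl_eq {n : ℕ} (k : Fin n) : Fin.castLE le_rfl k = k := rfl

lemma map_univ_le {X Y : Type*} [MeasurableSpace X] [MeasurableSpace Y]
    (g : X → Y) (ν : Measure X) : ν.map g Set.univ ≤ ν Set.univ := by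
  by_cases hg : AEMeasurable g ν
  · rw [Measure.map_apply_of_aemeasurable hg MeasurableSet.univ]
    simp
  · simp [Measure.map_of_not_aemeasurable hg]

lemma isFiniteMeasure_bind {X Y : Type*} [MeasurableSpace X] [MeasurableSpace Y]
    (μ : Measure X) [IsFiniteMeasure μ] (g : X → Measure Y)
    (hg : ∀ x, g x Set.univ ≤ 1) : IsFiniteMeasure (μ.bind g) := by
  constructor
  by_cases hm : AEMeasurable g μ
  · rw [Measure.bind, Measure.join_apply MeasurableSet.univ,
      lintegral_map' (Measure.measurable_coe MeasurableSet.univ).aemeasurable hm]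
    calc ∫⁻ x, g x Set.univ ∂μ ≤ ∫⁻ _, 1 ∂μ := lintegral_mono hg
      _ = μ Set.univ := lintegral_one
      _ < ⊤ := measure_lt_top μ _
  · rw [Measure.bind, Measure.map_of_not_aemeasurable hm]
    simp

lemma isFiniteMeasure_seqMeas {Ξ : Type*} [MeasurableSpace Ξ] [TopologicalSpace Ξ]
    [OpensMeasurableSpace Ξ] {T : ℕ}
    {Psel : (t : ℕ) → (Fin t → Ξ) → Set (Measure Ξ)} (hPsel : PselStanding Ξ T Psel)
    {Pk : (t : ℕ) → (Fin t → Ξ) → Measure Ξ} (hPk : IsUnivMeasSelector T Psel Pk) :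
    ∀ t, t ≤ T → IsFiniteMeasure (seqMeas Pk t) := by
  intro t
  induction t with
  | zero =>
      intro _
      rw [seqMeas]
      infer_instance
  | succ t ih =>
      intro hle
      haveI := ih (Nat.le_of_succ_le hle)
      rw [seqMeas]
      refine isFiniteMeasure_bind _ _ fun ω => ?_
      haveI : IsProbabilityMeasure (Pk t ω) :=
        hPsel.2.1 t ω _ (hPk.1 t (Nat.lt_of_succ_le hle) ω)
      refine le_trans (map_univ_le _ _) ?_
      rw [measure_univ]

lemma measurable_enl_proj {Ω : Type*} (T N : ℕ) (ℱ : ℕ → MeasurableSpace Ω) (t : ℕ) :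
    @Measurable (EnlOmega Ω T (N + 1)) (EnlOmega Ω T N) (enlF T (N + 1) ℱ t) (enlF T N ℱ t)
      (fun x => (x.1, fun k => x.2 (Fin.castLE (Nat.le_succ N) k))) := by
  refine @measurable_generateFrom _ _ (enlF T (N + 1) ℱ t) _ _ ?_
  rintro A (⟨B, hB, rfl⟩ | ⟨k, s, hs, rfl⟩)
  · exact MeasurableSpace.measurableSet_generateFrom (Or.inl ⟨B, hB, rfl⟩)
  · exact MeasurableSpace.measurableSet_generateFrom
      (Or.inr ⟨Fin.castLE (Nat.le_succ N) k, s, hs, rfl⟩)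

lemma measurable_enl_snoc {Ω : Type*} (T N : ℕ) (ℱ : ℕ → MeasurableSpace Ω) (u : Fin (T + 1))
    (t : ℕ) :
    @Measurable (EnlOmega Ω T N) (EnlOmega Ω T (N + 1)) (enlF T N ℱ t) (enlF T (N + 1) ℱ t)
      (fun y => (y.1, Fin.snoc y.2 u)) := by
  refine @measurable_generateFrom _ _ (enlF T N ℱ t) _ _ ?_
  rintro A (⟨B, hB, rfl⟩ | ⟨k, s, hs, rfl⟩)
  · exact MeasurableSpace.measurableSet_generateFrom (Or.inl ⟨B, hB, rfl⟩)
  · induction k using Fin.lastCases with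
    | last =>
        by_cases hus : (u : ℕ) ≤ s
        · have he : (fun y : EnlOmega Ω T N => (y.1, (Fin.snoc y.2 u : Fin (N + 1) → Fin (T + 1))))
              ⁻¹' {x : EnlOmega Ω T (N + 1) | ((x.2 (Fin.last N) : ℕ)) ≤ s} = Set.univ := by
            ext y
            simp [Fin.snoc_last, hus]
          rw [he]
          exact @MeasurableSet.univ _ (enlF T N ℱ t)
        · have he : (fun y : EnlOmega Ω T N => (y.1, (Fin.snoc y.2 u : Fin (N + 1) → Fin (T + 1))))
              ⁻¹' {x : EnlOmega Ω T (N + 1) | ((x.2 (Fin.last N) : ℕ)) ≤ s} = ∅ := by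
            ext y
            simp [Fin.snoc_last, hus]
          rw [he]
          exact @MeasurableSet.empty _ (enlF T N ℱ t)
    | cast j =>
        have he : (fun y : EnlOmega Ω T N => (y.1, (Fin.snoc y.2 u : Fin (N + 1) → Fin (T + 1))))
            ⁻¹' {x : EnlOmega Ω T (N + 1) | ((x.2 (Fin.castSucc j) : ℕ)) ≤ s}
            = {y : EnlOmega Ω T N | ((y.2 j : ℕ)) ≤ s} := by
          ext y
          simp [Fin.snoc_castSucc]
        rw [he]
        exact MeasurableSpace.measurableSet_generateFrom (Or.inr ⟨j, s, hs, rfl⟩)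

lemma measurable_snoc_fn {S : Type*} [MeasurableSpace S] (n : ℕ) (u : S) :
    Measurable (fun r : Fin n → S => (Fin.snoc r u : Fin (n + 1) → S)) := by
  refine measurable_pi_lambda _ fun i => ?_
  induction i using Fin.lastCases with
  | last =>
      simp only [Fin.snoc_last]
      exact measurable_const
  | cast j =>
      simp only [Fin.snoc_castSucc]
      exact measurable_pi_apply j

lemma ae_prod_of_ae_sections {X S : Type*} [MeasurableSpace X] [MeasurableSpace S]
    [Countable S] [MeasurableSingletonClass S]
    {P : Measure X} {R : Measure S} [SFinite R] {p : X × S → Prop}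
    (hp : ∀ s, ∀ᵐ ω ∂P, p (ω, s)) : ∀ᵐ x ∂(P.prod R), p x := by
  rw [MeasureTheory.ae_iff]
  have hsub : {x : X × S | ¬ p x} ⊆
      ⋃ s : S, (MeasureTheory.toMeasurable P {ω | ¬ p (ω, s)}) ×ˢ ({s} : Set S) := by
    rintro ⟨ω, s⟩ hx
    exact Set.mem_iUnion.2 ⟨s, ⟨MeasureTheory.subset_toMeasurable _ _ hx, rfl⟩⟩
  refine measure_mono_null hsub (measure_iUnion_null fun s => ?_)
  rw [Measure.prod_prod, measure_toMeasurable]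
  have h0 : P {ω | ¬ p (ω, s)} = 0 := by
    simpa [MeasureTheory.ae_iff] using hp s
  rw [h0, zero_mul]

lemma prod_map_snd {X S S' : Type*} [MeasurableSpace X] [MeasurableSpace S] [MeasurableSpace S']
    (P : Measure X) [SFinite P] (R : Measure S) [SFinite R] {g : S → S'} (hg : Measurable g) :
    P.prod (R.map g) = (P.prod R).map (fun y : X × S => (y.1, g y.2)) := by
  have hmap := Measure.map_prod_map (f := id) (g := g) P R measurable_id hg
  rw [Measure.map_id] at hmap
  rw [hmap]
  rfl

lemma payoff_snoc_eq {Ω : Type*} (T d L N : ℕ)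
    (S : ℕ → Ω → Fin d → ℝ) (f : Fin L → Ω → ℝ) (h : Fin N → ℕ → Ω → ℝ)
    (α' : Fin L → ℝ) (γ' : Fin N → ℝ)
    (H : ℕ → EnlOmega Ω T (N + 1) → Fin d → ℝ) (a : Fin L → ℝ) (c : Fin N → ℝ)
    (u : Fin (T + 1)) (y : EnlOmega Ω T N) :
    enlStockGain T d (N + 1) H S (y.1, Fin.snoc y.2 u)
      + (∑ i, a i * (extFun T (N + 1) (f i) (y.1, Fin.snoc y.2 u) - α' i))
      - (∑ k, c k * (extShort T N (N + 1) (Nat.le_succ N) h k (y.1, Fin.snoc y.2 u) - γ' k))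
    = enlStockGain T d N (fun t z => H t (z.1, Fin.snoc z.2 u)) S y
      + (∑ i, a i * (extFun T N (f i) y - α' i))
      - (∑ k, c k * (extShort T N N le_rfl h k y - γ' k)) := by
  simp only [enlStockGain, extFun, extShort, snoc_castLE_eq, castLE_rfl_eq]

lemma payoff_proj_snoc_eq {Ω : Type*} (T d L N : ℕ)
    (S : ℕ → Ω → Fin d → ℝ) (f : Fin L → Ω → ℝ) (h : Fin N → ℕ → Ω → ℝ)
    (α' : Fin L → ℝ) (γ' : Fin N → ℝ)
    (H : ℕ → EnlOmega Ω T N → Fin d → ℝ) (a : Fin L → ℝ) (c : Fin N → ℝ)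
    (u : Fin (T + 1)) (y : EnlOmega Ω T N) :
    enlStockGain T d (N + 1)
        (fun t x => H t (x.1, fun k => x.2 (Fin.castLE (Nat.le_succ N) k))) S
        (y.1, Fin.snoc y.2 u)
      + (∑ i, a i * (extFun T (N + 1) (f i) (y.1, Fin.snoc y.2 u) - α' i))
      - (∑ k, c k * (extShort T N (N + 1) (Nat.le_succ N) h k (y.1, Fin.snoc y.2 u) - γ' k))
    = enlStockGain T d N H S y
      + (∑ i, a i * (extFun T N (f i) y - α' i))
      - (∑ k, c k * (extShort T N N le_rfl h k y - γ' k)) := by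
  simp only [enlStockGain, extFun, extShort, snoc_castLE_eq, castLE_rfl_eq]

/-- Lemma 3.4 of the paper. SNA with `((f̄^N, -h̄^N), (α, -γ))` on the
`N`-fold enlarged space holds iff SNA with `((f̄^{N+1}, -h̄^{N+1}), (α, -γ))` on the
`(N+1)`-fold enlarged space holds. -/
theorem SNAfh_N_iff_SNAfh_Nsucc
    (Ξ : Type*) [MetricSpace Ξ] [CompleteSpace Ξ] [SecondCountableTopology Ξ]
    [MeasurableSpace Ξ] [BorelSpace Ξ]
    (T d L N : ℕ)
    (Psel : (t : ℕ) → (Fin t → Ξ) → Set (Measure Ξ)) (hPsel : PselStanding Ξ T Psel)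
    (S : ℕ → POmega Ξ T → Fin d → ℝ) (hS : ∀ t, Measurable[borelF Ξ T t] (S t))
    (f : Fin L → POmega Ξ T → ℝ) (hf : ∀ i, Measurable (f i))
    (h : Fin N → ℕ → POmega Ξ T → ℝ) (hh : ∀ k t, Measurable[borelF Ξ T t] (h k t))
    (α : Fin L → ℝ) (γ : Fin N → ℝ) :
    SNAfh T d L N N le_rfl (origF Ξ T) S f h (PbarSet T N (PSet T Psel)) α γ ↔
      SNAfh T d L N (N + 1) (Nat.le_succ N) (origF Ξ T) S f h
        (PbarSet T (N + 1) (PSet T Psel)) α γ := by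
  have hfin : ∀ P ∈ PSet T Psel, IsFiniteMeasure P := by
    rintro P ⟨Pk, hPk, rfl⟩
    exact isFiniteMeasure_seqMeas hPsel hPk T le_rfl
  constructor
  · rintro ⟨ε, hε, hNA⟩
    refine ⟨ε, hε, ?_⟩
    intro H a c hH ha hc hqs
    have key := fun u : Fin (T + 1) =>
      hNA (fun t z => H t (z.1, Fin.snoc z.2 u)) a c
        (fun t => (hH t).comp (measurable_enl_snoc T N (origF Ξ T) u t)) ha hc (by
          rintro Q ⟨P, hP, R, hR, rfl⟩
          haveI := hfin P hP
          haveI := hR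
          have hg : Measurable
              (fun r : Fin N → Fin (T + 1) => (Fin.snoc r u : Fin (N + 1) → Fin (T + 1))) :=
            measurable_snoc_fn N u
          have hmem : P.prod (R.map (fun r => Fin.snoc r u))
              ∈ PbarSet T (N + 1) (PSet T Psel) :=
            ⟨P, hP, _, Measure.isProbabilityMeasure_map hg.aemeasurable, rfl⟩
          have h1 := hqs _ hmem
          rw [prod_map_snd P R hg] at h1
          have hι : Measurable (fun y : EnlOmega (POmega Ξ T) T N =>
              (y.1, (Fin.snoc y.2 u : Fin (N + 1) → Fin (T + 1)))) :=
            measurable_fst.prodMk (hg.comp measurable_snd)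
          have h2 := ae_of_ae_map hι.aemeasurable h1
          filter_upwards [h2] with y hy
          exact hy.trans_eq
            (payoff_snoc_eq T d L N S f h (fun i => α i - ε) (fun k => γ k + ε) H a c u y))
    rintro Q' ⟨P, hP, R', hR', rfl⟩
    haveI := hfin P hP
    haveI := hR'
    refine ae_prod_of_ae_sections fun s => ?_
    have hkey := key (s (Fin.last N))
      (P.prod (Measure.dirac (fun k : Fin N => s (Fin.castLE (Nat.le_succ N) k))))
      ⟨P, hP, _, Measure.dirac.isProbabilityMeasure, rfl⟩
    rw [Measure.prod_dirac] at hkey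
    have h3 := ae_of_ae_map measurable_prodMk_right.aemeasurable hkey
    filter_upwards [h3] with ω hω
    have hs : (Fin.snoc (fun k : Fin N => s (Fin.castLE (Nat.le_succ N) k)) (s (Fin.last N)) :
        Fin (N + 1) → Fin (T + 1)) = s := Fin.snoc_init_self s
    rw [← hs]
    exact (payoff_snoc_eq T d L N S f h (fun i => α i - ε) (fun k => γ k + ε) H a c
      (s (Fin.last N)) (ω, fun k : Fin N => s (Fin.castLE (Nat.le_succ N) k))).trans hω
  · rintro ⟨ε, hε, hNA⟩
    refine ⟨ε, hε, ?_⟩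
    intro H a c hH ha hc hqs
    have hgr : Measurable (fun r : Fin (N + 1) → Fin (T + 1) =>
        (fun k : Fin N => r (Fin.castLE (Nat.le_succ N) k))) :=
      measurable_pi_lambda _ fun k => measurable_pi_apply _
    have key := hNA (fun t x => H t (x.1, fun k => x.2 (Fin.castLE (Nat.le_succ N) k))) a c
      (fun t => (hH t).comp (measurable_enl_proj T N (origF Ξ T) t)) ha hc (by
        rintro Q' ⟨P, hP, R', hR', rfl⟩
        haveI := hfin P hP
        haveI := hR'
        have hmem : P.prod (R'.map (fun r => fun k : Fin N => r (Fin.castLE (Nat.le_succ N) k)))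
            ∈ PbarSet T N (PSet T Psel) :=
          ⟨P, hP, _, Measure.isProbabilityMeasure_map hgr.aemeasurable, rfl⟩
        have h1 := hqs _ hmem
        rw [prod_map_snd P R' hgr] at h1
        have hπ : Measurable (fun x : EnlOmega (POmega Ξ T) T (N + 1) =>
            (x.1, fun k : Fin N => x.2 (Fin.castLE (Nat.le_succ N) k))) :=
          measurable_fst.prodMk (hgr.comp measurable_snd)
        have h2 := ae_of_ae_map hπ.aemeasurable h1
        filter_upwards [h2] with x hx
        exact hx)
    rintro Q ⟨P, hP, R, hR, rfl⟩
    haveI := hfin P hP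
    haveI := hR
    have hg0 : Measurable (fun r : Fin N → Fin (T + 1) =>
        (Fin.snoc r (0 : Fin (T + 1)) : Fin (N + 1) → Fin (T + 1))) :=
      measurable_snoc_fn N 0
    have hmem : P.prod (R.map (fun r => Fin.snoc r (0 : Fin (T + 1))))
        ∈ PbarSet T (N + 1) (PSet T Psel) :=
      ⟨P, hP, _, Measure.isProbabilityMeasure_map hg0.aemeasurable, rfl⟩
    have h1 := key _ hmem
    rw [prod_map_snd P R hg0] at h1
    have hι : Measurable (fun y : EnlOmega (POmega Ξ T) T N =>
        (y.1, (Fin.snoc y.2 (0 : Fin (T + 1)) : Fin (N + 1) → Fin (T + 1)))) :=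
      measurable_fst.prodMk (hg0.comp measurable_snd)
    have h2 := ae_of_ae_map hι.aemeasurable h1
    filter_upwards [h2] with y hy
    exact (payoff_proj_snoc_eq T d L N S f h (fun i => α i - ε) (fun k => γ k + ε) H a c
      (0 : Fin (T + 1)) y).symm.trans hy

end Stmt15
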